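/- For a rooted tree G=(V,E), the set { γ ∈ [0,1]^V : ∑_{v'∈Ā(v)} γ_{v'} ≤ 1 for all v ∈ V } equals the set of vectors γ of the form γ_v = κ_v · ∏_{v'∈A(v)} (1 − κ_{v'}) for some κ ∈ [0,1]^V. -/

import Mathlib

open Finset

def ancestors {n : ℕ} [NeZero n] (par : Fin n → Fin n) (hpar : ∀ v, v ≠ 0 → par v < v) :
    Fin n → Finset (Fin n) :=
  fun v =>
    if h : v = 0 then ∅ else insert (par v) (ancestors par hpar (par v))
termination_by v => (v : ℕ)
decreasing_by exact hpar _ h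

/-- `v` together with its strict ancestors. -/
def barA {n : ℕ} [NeZero n] (par : Fin n → Fin n) (hpar : ∀ v, v ≠ 0 → par v < v)
    (v : Fin n) : Finset (Fin n) :=
  insert v (ancestors par hpar v)

/-- `v` together with its descendants. -/
def barD {n : ℕ} [NeZero n] (par : Fin n → Fin n) (hpar : ∀ v, v ≠ 0 → par v < v)
    (v : Fin n) : Finset (Fin n) :=
  Finset.univ.filter (fun w => v ∈ barA par hpar w)

/-- strict descendants of `v`. -/
def strictD {n : ℕ} [NeZero n] (par : Fin n → Fin n) (hpar : ∀ v, v ≠ 0 → par v < v)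
    (v : Fin n) : Finset (Fin n) :=
  Finset.univ.filter (fun w => v ∈ ancestors par hpar w)

/-- children of `v`. -/
def children {n : ℕ} [NeZero n] (par : Fin n → Fin n) (v : Fin n) : Finset (Fin n) :=
  Finset.univ.filter (fun w => w ≠ 0 ∧ par w = v)

/-! The product form is a stick-breaking scheme along root-to-leaf paths: `∏_{A(v)} (1 - κ)` is
the mass left after the ancestors of `v` have taken their shares, so the shares on `Ā(v)` always
sum to `1 - ∏_{Ā(v)} (1 - κ) ≤ 1`. Conversely, `γ` is recovered by letting each vertex take the
fraction `κ_v = γ_v / (1 - ∑_{A(v)} γ)` of the mass its ancestors left over. -/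

section Tree

variable {n : ℕ} [NeZero n] (par : Fin n → Fin n) (hpar : ∀ v, v ≠ 0 → par v < v)

lemma ancestors_zero : ancestors par hpar 0 = ∅ := by
  rw [ancestors, dif_pos rfl]

lemma ancestors_of_ne_zero {v : Fin n} (hv : v ≠ 0) :
    ancestors par hpar v = barA par hpar (par v) := by
  rw [ancestors, dif_neg hv, barA]

lemma lt_of_mem_ancestors {v w : Fin n} (hw : w ∈ ancestors par hpar v) : w < v := by
  by_cases hv : v = 0
  · simp [hv, ancestors_zero] at hw
  · rw [ancestors_of_ne_zero par hpar hv, barA, mem_insert] at hw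
    rcases hw with rfl | hw
    · exact hpar v hv
    · exact (lt_of_mem_ancestors hw).trans (hpar v hv)
termination_by (v : ℕ)
decreasing_by exact hpar v hv

lemma self_notMem_ancestors (v : Fin n) : v ∉ ancestors par hpar v :=
  fun h => (lt_of_mem_ancestors par hpar h).false

lemma sum_barA {M : Type*} [AddCommMonoid M] (f : Fin n → M) (v : Fin n) :
    ∑ w ∈ barA par hpar v, f w = f v + ∑ w ∈ ancestors par hpar v, f w :=
  sum_insert (self_notMem_ancestors par hpar v)

lemma prod_barA {M : Type*} [CommMonoid M] (f : Fin n → M) (v : Fin n) :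
    ∏ w ∈ barA par hpar v, f w = f v * ∏ w ∈ ancestors par hpar v, f w :=
  prod_insert (self_notMem_ancestors par hpar v)

lemma prod_ancestors_one_sub {R : Type*} [CommRing R] (κ : Fin n → R) (v : Fin n) :
    ∏ w ∈ ancestors par hpar v, (1 - κ w) =
      1 - ∑ w ∈ ancestors par hpar v, κ w * ∏ u ∈ ancestors par hpar w, (1 - κ u) := by
  by_cases hv : v = 0
  · simp [hv, ancestors_zero]
  · rw [ancestors_of_ne_zero par hpar hv, sum_barA, prod_barA,
      prod_ancestors_one_sub κ (par v)]
    ring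
termination_by (v : ℕ)
decreasing_by exact hpar v hv

lemma sum_barA_mul_prod_ancestors {R : Type*} [CommRing R] (κ : Fin n → R) (v : Fin n) :
    ∑ w ∈ barA par hpar v, κ w * ∏ u ∈ ancestors par hpar w, (1 - κ u) =
      1 - ∏ w ∈ barA par hpar v, (1 - κ w) := by
  rw [sum_barA, prod_barA, prod_ancestors_one_sub par hpar κ v]
  ring

variable {K : Type*} [Field K] [LinearOrder K] [IsStrictOrderedRing K]

/-- Equal to `0` when the ancestors of `v` leave no mass over, since `x / 0 = 0`. -/
def remainingFraction (γ : Fin n → K) (v : Fin n) : K :=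
  γ v / (1 - ∑ w ∈ ancestors par hpar v, γ w)

variable {par hpar} {γ : Fin n → K} (hsum : ∀ v, ∑ w ∈ barA par hpar v, γ w ≤ 1)
include hsum

lemma le_one_sub_sum_ancestors (v : Fin n) : γ v ≤ 1 - ∑ w ∈ ancestors par hpar v, γ w := by
  linarith [hsum v, sum_barA par hpar γ v]

variable (hγ : ∀ v, 0 ≤ γ v)
include hγ

lemma remainingFraction_mem_Icc (v : Fin n) : remainingFraction par hpar γ v ∈ Set.Icc 0 1 :=
  have hle := le_one_sub_sum_ancestors hsum v
  ⟨div_nonneg (hγ v) ((hγ v).trans hle), div_le_one_of_le₀ hle ((hγ v).trans hle)⟩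

lemma eq_remainingFraction_mul_prod (v : Fin n) :
    γ v = remainingFraction par hpar γ v *
      ∏ w ∈ ancestors par hpar v, (1 - remainingFraction par hpar γ w) := by
  induction v using WellFoundedLT.induction with
  | _ v ih =>
    have hmass : ∏ w ∈ ancestors par hpar v, (1 - remainingFraction par hpar γ w) =
        1 - ∑ w ∈ ancestors par hpar v, γ w := by
      rw [prod_ancestors_one_sub,
        sum_congr rfl fun w hw => (ih w (lt_of_mem_ancestors par hpar hw)).symm]
    rw [hmass, remainingFraction, div_mul_cancel_of_imp]
    intro hzero
    exact le_antisymm (hzero ▸ le_one_sub_sum_ancestors hsum v) (hγ v)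

end Tree

/-- The polytope `{γ ∈ [0,1]^V : ∑_{v' ∈ Ā(v)} γ_{v'} ≤ 1 ∀ v}` equals the set of vectors
of the form `γ_v = κ_v ∏_{v' ∈ A(v)} (1 - κ_{v'})` for some `κ ∈ [0,1]^V`. -/
theorem polytope_eq_product_form {n : ℕ} [NeZero n] (par : Fin n → Fin n)
    (hpar : ∀ v, v ≠ 0 → par v < v) :
    {γ : Fin n → ℝ | (∀ v, 0 ≤ γ v ∧ γ v ≤ 1) ∧
        ∀ v, ∑ v' ∈ barA par hpar v, γ v' ≤ 1} =
    {γ : Fin n → ℝ | ∃ κ : Fin n → ℝ, (∀ v, 0 ≤ κ v ∧ κ v ≤ 1) ∧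
        ∀ v, γ v = κ v * ∏ v' ∈ ancestors par hpar v, (1 - κ v')} := by
  ext γ
  constructor
  · rintro ⟨hγ, hsum⟩
    have hγ₀ v := (hγ v).1
    exact ⟨remainingFraction par hpar γ, remainingFraction_mem_Icc hsum hγ₀,
      eq_remainingFraction_mul_prod hsum hγ₀⟩
  · rintro ⟨κ, hκ, hγ⟩
    obtain rfl : γ = fun v => κ v * ∏ w ∈ ancestors par hpar v, (1 - κ w) := funext hγ
    have hprod s : ∏ w ∈ s, (1 - κ w) ∈ Set.Icc 0 1 :=
      ⟨prod_nonneg fun w _ => sub_nonneg.2 (hκ w).2,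
        prod_le_one (fun w _ => sub_nonneg.2 (hκ w).2) fun w _ => sub_le_self _ (hκ w).1⟩
    refine ⟨fun v => ⟨mul_nonneg (hκ v).1 (hprod _).1,
      mul_le_one₀ (hκ v).2 (hprod _).1 (hprod _).2⟩, fun v => ?_⟩
    rw [sum_barA_mul_prod_ancestors]
    exact sub_le_self _ (hprod _).1
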